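/- Let d : ℕ → ℕ be a strictly increasing function (the diagonalization positions), and for each i let Mᵢ : (ℕ → Bool) → Bool be a functional and Sᵢ ⊆ ℕ a set such that: (a) Mᵢ depends only on coordinates in Sᵢ (if B and B' agree on Sᵢ then Mᵢ B = Mᵢ B'); (b) d i ∉ Sᵢ; and (c) Sᵢ contains no d j with j > i. Then there exists A : ℕ → Bool such that for every i, A (d i) ≠ Mᵢ A. -/
import Mathlib

noncomputable def fAux (d : ℕ → ℕ) (M : ℕ → (ℕ → Bool) → Bool) : ℕ → Bool
  | i => ! M i (fun n => if h : ∃ j, j < i ∧ d j = n then fAux d M h.choose else false)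
decreasing_by exact h.choose_spec.1

theorem stmt_5 (d : ℕ → ℕ) (hd : StrictMono d)
    (M : ℕ → (ℕ → Bool) → Bool) (S : ℕ → Set ℕ)
    (hdep : ∀ i (B B' : ℕ → Bool), (∀ n ∈ S i, B n = B' n) → M i B = M i B')
    (hself : ∀ i, d i ∉ S i)
    (hlater : ∀ i j, i < j → d j ∉ S i) :
    ∃ A : ℕ → Bool, ∀ i, A (d i) ≠ M i A := by
  classical
  set f := fAux d M with hf
  set A : ℕ → Bool := fun n => if h : ∃ j, d j = n then f h.choose else false with hA
  refine ⟨A, fun i => ?_⟩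
  set B : ℕ → Bool := fun n => if h : ∃ j, j < i ∧ d j = n then f h.choose else false with hB
  have hfi : f i = ! M i B := by rw [hf, fAux]
  have hAd : A (d i) = f i := by
    have h : ∃ j, d j = d i := ⟨i, rfl⟩
    have : h.choose = i := hd.injective h.choose_spec
    simp only [hA, dif_pos h, this]
  have hMeq : M i A = M i B := by
    apply hdep
    intro n hn
    by_cases h : ∃ j, d j = n
    · obtain ⟨j, hj⟩ := h
      subst hj
      have hji : j < i := by
        rcases lt_trichotomy j i with h1 | h1 | h1
        · exact h1
        · exact absurd (h1 ▸ hn) (hself i)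
        · exact absurd hn (hlater i j h1)
      have h1 : ∃ k, d k = d j := ⟨j, rfl⟩
      have h2 : ∃ k, k < i ∧ d k = d j := ⟨j, hji, rfl⟩
      have e1 : h1.choose = j := hd.injective h1.choose_spec
      have e2 : h2.choose = j := hd.injective h2.choose_spec.2
      simp only [hA, hB, dif_pos h1, dif_pos h2, e1, e2]
    · have h2 : ¬ ∃ k, k < i ∧ d k = n := fun ⟨k, _, hk⟩ => h ⟨k, hk⟩
      simp only [hA, hB, dif_neg h, dif_neg h2]
  rw [hAd, hfi, hMeq]
  simp
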